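/- Let (E,ℒ) be a labeled graph satisfying the standing assumptions with ℰ the smallest normal accommodating set, let A ∈ ℰ be minimal, and suppose (α,A) is a loop. Then H := {B ∈ ℰ : r(B,β) ∩ A = ∅ for all β ∈ ℒ*(E)} is a hereditary and saturated subset of ℰ, and A ∉ H. If moreover α has the smallest length among all loops at A, α has an exit, and every loop (β,A) satisfies β^m = α^k for some integers m, k ≥ 1, then H contains a nonempty set. -/

import Mathlib

/-- The `n`-fold concatenation (power) `w^n` of a finite word `w`. -/
def wpow {Λ : Type*} (w : List Λ) (n : ℕ) : List Λ := (List.replicate n w).flatten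

/-- The finite word `x_{[1,n]}` formed by the first `n` letters of an infinite word `x`. -/
def wordPrefix {Λ : Type*} (x : ℕ → Λ) (n : ℕ) : List Λ := (List.range n).map x

/-- A labeled graph `(E, ℒ)`: a directed graph with vertex set `V` and edge type `Edge`
(with range and source maps), together with a surjective labeling map `lbl` onto the
alphabet `Λ`. -/
structure LabeledGraph (V : Type*) (Λ : Type*) where
  Edge : Type*
  src : Edge → V
  rng : Edge → V
  lbl : Edge → Λ
  lbl_surjective : Function.Surjective lbl

namespace LabeledGraph

variable {V : Type*} {Λ : Type*}

/-- `G.PathLabel u w α` holds iff there is a finite path `λ` of length `≥ 1` in the graph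
with source `u`, range `w` and label word `ℒ(λ) = α`. -/
inductive PathLabel (G : LabeledGraph V Λ) : V → V → List Λ → Prop
  | single (e : G.Edge) : PathLabel G (G.src e) (G.rng e) [G.lbl e]
  | cons (e : G.Edge) {w : V} {α : List Λ} :
      PathLabel G (G.rng e) w α → PathLabel G (G.src e) w (G.lbl e :: α)

variable (G : LabeledGraph V Λ)

/-- `α ∈ ℒ*(E)`: `α` is the label of some path of length `≥ 1`. -/
def IsLabel (α : List Λ) : Prop := ∃ u w, G.PathLabel u w α

/-- The relative range `r(A, α)` of `α` with respect to `A`. -/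
def rel (A : Set V) (α : List Λ) : Set V := {w | ∃ u ∈ A, G.PathLabel u w α}

/-- `r(α) = r(E⁰, α)`. -/
def range' (α : List Λ) : Set V := G.rel Set.univ α

/-- `s(α)`: the set of sources of paths labeled `α`. -/
def srcSet (α : List Λ) : Set V := {u | ∃ w, G.PathLabel u w α}

/-- `ℒ(AEⁿ)`: labels of paths of length `n` with source in `A`. -/
def lblFrom (A : Set V) (n : ℕ) : Set (List Λ) :=
  {α | α.length = n ∧ ∃ u ∈ A, ∃ w, G.PathLabel u w α}

/-- `ℒ(AE^{≥1})`: labels of paths of length `≥ 1` with source in `A`. -/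
def lblFromGe (A : Set V) : Set (List Λ) := {α | ∃ u ∈ A, ∃ w, G.PathLabel u w α}

/-- `ℒ(EⁿA)`: labels of paths of length `n` with range in `A`. -/
def lblTo (A : Set V) (n : ℕ) : Set (List Λ) :=
  {α | α.length = n ∧ ∃ u, ∃ w ∈ A, G.PathLabel u w α}

/-- The generalized vertex `[v]_l`: the set of vertices `w` receiving at least one edge
such that `ℒ(E^k w) = ℒ(E^k v)` for all `1 ≤ k ≤ l`. -/
def gv (v : V) (l : ℕ) : Set V :=
  {w | (∃ e : G.Edge, G.rng e = w) ∧
    ∀ k : ℕ, 1 ≤ k → k ≤ l → G.lblTo {w} k = G.lblTo {v} k}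

/-- Membership in `ℰ`, the smallest collection of subsets of `E⁰` containing all ranges
`r(α)` and closed under relative ranges, finite intersections, finite unions and
relative complements (the smallest normal accommodating set). -/
inductive memE : Set V → Prop
  | empty : memE ∅
  | range (α : List Λ) : α ≠ [] → memE (G.range' α)
  | relRange {A : Set V} (α : List Λ) : α ≠ [] → memE A → memE (G.rel A α)
  | inter {A C : Set V} : memE A → memE C → memE (A ∩ C)
  | union {A C : Set V} : memE A → memE C → memE (A ∪ C)
  | diff {A C : Set V} : memE A → memE C → memE (A \ C)

/-- The standing assumptions on the labeled space `(E, ℒ, ℰ)`: the graph has no sinks and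
the labeled space is weakly left-resolving, set-finite and receiver set-finite. -/
structure Standing : Prop where
  no_sinks : ∀ u : V, ∃ e : G.Edge, G.src e = u
  weakly_left_resolving : ∀ A C : Set V, G.memE A → G.memE C →
    ∀ α : List Λ, α ≠ [] → G.rel (A ∩ C) α = G.rel A α ∩ G.rel C α
  set_finite : ∀ A : Set V, G.memE A → ∀ k : ℕ, 1 ≤ k → (G.lblFrom A k).Finite
  receiver_set_finite : ∀ A : Set V, G.memE A → ∀ k : ℕ, 1 ≤ k → (G.lblTo A k).Finite

/-- `α` is agreeable for `[v]_l` (the condition only depends on `l`):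
`α = βα' = α'γ` with `α', β, γ ∈ ℒ*(E)` and `|β| = |γ| ≤ l`. -/
def Agreeable (l : ℕ) (α : List Λ) : Prop :=
  ∃ α' β γ : List Λ, G.IsLabel α' ∧ G.IsLabel β ∧ G.IsLabel γ ∧
    β.length = γ.length ∧ β.length ≤ l ∧ α = β ++ α' ∧ α = α' ++ γ

/-- `α` (a path with `s(α) ∩ [v]_l ≠ ∅`) is disagreeable for `[v]_l`. -/
def DisagreeableFor (v : V) (l : ℕ) (α : List Λ) : Prop :=
  (G.srcSet α ∩ G.gv v l).Nonempty ∧ ¬ G.Agreeable l α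

/-- The generalized vertex `[v]_l` is disagreeable: there is `N ≥ 1` such that for every
`n > N` there is a path in `ℒ(E^{≥n})` which is disagreeable for `[v]_l`. -/
def DisagreeableGV (v : V) (l : ℕ) : Prop :=
  ∃ N : ℕ, 1 ≤ N ∧ ∀ n : ℕ, N < n →
    ∃ α : List Λ, n ≤ α.length ∧ G.DisagreeableFor v l α

/-- The labeled space `(E, ℒ, ℰ)` is disagreeable. -/
def Disagreeable : Prop :=
  ∀ v : V, ∃ L : ℕ, 1 ≤ L ∧ ∀ l : ℕ, L ≤ l → G.DisagreeableGV v l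

/-- `(α, A)` is a loop: `A ∈ ℰ` is nonempty, `α ∈ ℒ*(E)` and `A ⊆ r(A, α)`. -/
def IsLoop (α : List Λ) (A : Set V) : Prop :=
  α ≠ [] ∧ G.memE A ∧ A.Nonempty ∧ A ⊆ G.rel A α

/-- The loop `(α, A)` has an exit: either (i) there is `β ∈ ℒ(AE^{|α|})` with `β ≠ α` and
`r(A, β) ≠ ∅`, or (ii) `A ⊊ r(A, α)`. -/
def HasExit (α : List Λ) (A : Set V) : Prop :=
  (∃ β : List Λ, β ∈ G.lblFrom A α.length ∧ β ≠ α ∧ (G.rel A β).Nonempty) ∨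
    A ⊂ G.rel A α

/-- `A ∈ ℰ` is minimal: `A ≠ ∅` and `A ∩ C ∈ {A, ∅}` for every `C ∈ ℰ`. -/
def MinimalSet (A : Set V) : Prop :=
  G.memE A ∧ A.Nonempty ∧ ∀ C : Set V, G.memE C → A ∩ C = A ∨ A ∩ C = ∅

/-- A set `Bset ⊆ E⁰` connects to a loop: there are a loop `(α, A)` and finitely many
paths `δ₁, …, δ_m ∈ ℒ*(E)`, none of which is an initial path of another, with
`A ⊆ ∪ᵢ r(Bset, δᵢ)`. -/
def ConnectsToLoop (Bset : Set V) : Prop :=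
  ∃ (α : List Λ) (A : Set V), G.IsLoop α A ∧
    ∃ (m : ℕ) (δ : Fin m → List Λ), (∀ i, G.IsLabel (δ i)) ∧
      (∀ i j, i ≠ j → ¬ (δ i <+: δ j)) ∧ A ⊆ ⋃ i, G.rel Bset (δ i)

/-- Every vertex connects to a loop: every generalized vertex `[v]_l` connects to a loop. -/
def EveryVertexConnectsToLoop : Prop :=
  ∀ (v : V) (l : ℕ), 1 ≤ l → (∃ e : G.Edge, G.rng e = v) →
    G.ConnectsToLoop (G.gv v l)

/-- The labeled space `(E, ℒ, ℰ)` is strongly cofinal. -/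
def StronglyCofinal : Prop :=
  ∀ x : ℕ → Λ, (∀ n : ℕ, 1 ≤ n → G.IsLabel (wordPrefix x n)) →
    ∀ (v : V) (l : ℕ), (∃ e : G.Edge, G.rng e = v) → 1 ≤ l →
      ∃ N : ℕ, 1 ≤ N ∧ ∃ (m : ℕ) (lam : Fin m → List Λ),
        (∀ i, G.IsLabel (lam i)) ∧
        G.range' (wordPrefix x N) ⊆ ⋃ i, G.rel (G.gv v l) (lam i)

/-- A subset `H ⊆ ℰ` is hereditary: it is closed under finite unions, relative ranges,
and subsets belonging to `ℰ`. -/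
def IsHereditary (H : Set (Set V)) : Prop :=
  (∀ A ∈ H, G.memE A) ∧
  (∀ A ∈ H, ∀ C ∈ H, A ∪ C ∈ H) ∧
  (∀ A ∈ H, ∀ β : List Λ, G.IsLabel β → G.rel A β ∈ H) ∧
  (∀ A ∈ H, ∀ C : Set V, G.memE C → C ⊆ A → C ∈ H)

/-- A subset `H ⊆ ℰ` is saturated: every `A ∈ ℰ` with `r(A, β) ∈ H` for all
`β ∈ ℒ*(E)` belongs to `H`. -/
def IsSaturated (H : Set (Set V)) : Prop :=
  ∀ A : Set V, G.memE A → (∀ β : List Λ, G.IsLabel β → G.rel A β ∈ H) → A ∈ H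

end LabeledGraph

/-!
A set `C ∈ ℰ` whose relative ranges never meet `A` stays disjoint from `A` along every path, which gives
heredity at once; saturation and `A ∉ H` follow from the loop at `A` and minimality, since a relative
range meeting the minimal set `A` must contain it.

For the nonempty member of `H` one uses the exit. If it is a word `β ≠ α` of length `|α|`, then
`r(A, β)` works: were `r(A, βγ)` to meet `A`, minimality would make `(βγ, A)` a loop, and
`(βγ)ᵐ = αᵏ` would force `β = α`. If instead `A ⊊ r(A, α)`, then `C = r(A, α) \ A` works: were
`r(C, γ)` to meet `A`, `(αγ, A)` would be a loop, and `(αγ)ᵐ = αᵏ` gives `γαᵏ = αᵏ⁻¹(αγ)`; so for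
`μ = γαᵏ` both `r(A, μ)` and `r(C, μ)` contain `A`, whereas weak left-resolvingness gives
`r(A, μ) ∩ r(C, μ) = r(A ∩ C, μ) = ∅`.
-/

theorem wpow_succ {Λ : Type*} (w : List Λ) (n : ℕ) : wpow w (n + 1) = w ++ wpow w n := by
  simp [wpow, List.replicate_succ]

theorem wpow_succ' {Λ : Type*} (w : List Λ) (n : ℕ) : wpow w (n + 1) = wpow w n ++ w := by
  simp [wpow, List.replicate_succ']

theorem eq_of_wpow_append_eq_wpow {Λ : Type*} {α β γ : List Λ} {m k : ℕ}
    (hlen : β.length = α.length) (hm : 1 ≤ m) (hk : 1 ≤ k)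
    (h : wpow (β ++ γ) m = wpow α k) : β = α := by
  obtain ⟨m, rfl⟩ := Nat.exists_eq_add_of_le' hm
  obtain ⟨k, rfl⟩ := Nat.exists_eq_add_of_le' hk
  rw [wpow_succ, wpow_succ, List.append_assoc] at h
  exact List.append_inj_left h hlen

theorem append_wpow_eq_of_wpow_append_eq_wpow {Λ : Type*} {α γ : List Λ} {m k : ℕ}
    (hm : 1 ≤ m) (hk : 1 ≤ k) (h : wpow (α ++ γ) m = wpow α k) :
    γ ++ wpow α k = wpow α (k - 1) ++ (α ++ γ) := by
  obtain ⟨m, rfl⟩ := Nat.exists_eq_add_of_le' hm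
  obtain ⟨k, rfl⟩ := Nat.exists_eq_add_of_le' hk
  have hcancel : γ ++ wpow (α ++ γ) m = wpow α k := by
    rw [wpow_succ, wpow_succ, List.append_assoc] at h
    exact List.append_cancel_left h
  calc γ ++ wpow α (k + 1) = γ ++ wpow (α ++ γ) m ++ (α ++ γ) := by
        rw [← h, wpow_succ', List.append_assoc]
    _ = wpow α (k + 1 - 1) ++ (α ++ γ) := by rw [hcancel, Nat.add_sub_cancel]

namespace LabeledGraph

variable {V : Type*} {Λ : Type*} {G : LabeledGraph V Λ}

theorem PathLabel.ne_nil {u w : V} {β : List Λ} (h : G.PathLabel u w β) : β ≠ [] := by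
  cases h <;> simp

theorem PathLabel.append {u v w : V} {x y : List Λ}
    (hx : G.PathLabel u v x) (hy : G.PathLabel v w y) : G.PathLabel u w (x ++ y) := by
  induction hx with
  | single e => exact .cons e hy
  | cons e _ ih => exact .cons e (ih hy)

theorem IsLabel.ne_nil {β : List Λ} (h : G.IsLabel β) : β ≠ [] :=
  let ⟨_, _, hp⟩ := h
  hp.ne_nil

theorem isLabel_of_mem_rel {A : Set V} {x : List Λ} {w : V} (h : w ∈ G.rel A x) :
    G.IsLabel x :=
  let ⟨u, _, hp⟩ := h
  ⟨u, w, hp⟩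

theorem rel_mono {A B : Set V} (h : A ⊆ B) (x : List Λ) : G.rel A x ⊆ G.rel B x := by
  rintro w ⟨u, hu, hp⟩
  exact ⟨u, h hu, hp⟩

theorem rel_rel_subset (A : Set V) (x y : List Λ) : G.rel (G.rel A x) y ⊆ G.rel A (x ++ y) := by
  rintro w ⟨v, ⟨u, hu, hx⟩, hy⟩
  exact ⟨u, hu, hx.append hy⟩

theorem rel_union (A B : Set V) (x : List Λ) : G.rel (A ∪ B) x = G.rel A x ∪ G.rel B x := by
  ext w
  simp only [rel, Set.mem_union, Set.mem_ofPred_eq, or_and_right, exists_or]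

theorem rel_empty (x : List Λ) : G.rel (∅ : Set V) x = ∅ := by
  ext w
  simp [rel]

theorem subset_rel_append {A : Set V} {x y : List Λ} (hx : A ⊆ G.rel A x)
    (hy : A ⊆ G.rel A y) : A ⊆ G.rel A (x ++ y) :=
  fun _ hw => G.rel_rel_subset A x y (G.rel_mono hx y (hy hw))

theorem subset_rel_wpow_append {A : Set V} {x y : List Λ} (hx : A ⊆ G.rel A x)
    (hy : A ⊆ G.rel A y) (n : ℕ) : A ⊆ G.rel A (wpow x n ++ y) := by
  induction n with
  | zero => simpa [wpow] using hy
  | succ n ih =>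
    rw [wpow_succ, List.append_assoc]
    exact subset_rel_append hx ih

theorem MinimalSet.subset_of_inter_nonempty {A D : Set V} (hA : G.MinimalSet A)
    (hD : G.memE D) (h : (D ∩ A).Nonempty) : A ⊆ D := by
  rcases hA.2.2 D hD with hAD | hAD
  · exact Set.inter_eq_left.mp hAD
  · rw [Set.inter_comm, hAD] at h
    exact absurd h Set.not_nonempty_empty

theorem MinimalSet.isLoop_of_inter_nonempty {A : Set V} {x : List Λ} (hA : G.MinimalSet A)
    (hx : x ≠ []) (h : (G.rel A x ∩ A).Nonempty) : G.IsLoop x A :=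
  ⟨hx, hA.1, hA.2.1, hA.subset_of_inter_nonempty (.relRange x hx hA.1) h⟩

theorem IsLoop.rel_inter_nonempty {A : Set V} {α : List Λ} (h : G.IsLoop α A) :
    (G.rel A α ∩ A).Nonempty :=
  let ⟨w, hw⟩ := h.2.2.1
  ⟨w, h.2.2.2 hw, hw⟩

theorem IsLoop.isLabel {A : Set V} {α : List Λ} (h : G.IsLoop α A) : G.IsLabel α :=
  let ⟨_, hw, _⟩ := h.rel_inter_nonempty
  isLabel_of_mem_rel hw

variable (G) in
/-- The set `H` of the theorem. -/
def avoiding (A : Set V) : Set (Set V) :=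
  {C | G.memE C ∧ ∀ β : List Λ, G.IsLabel β → G.rel C β ∩ A = ∅}

theorem isHereditary_avoiding (A : Set V) : G.IsHereditary (G.avoiding A) := by
  refine ⟨fun C hC => hC.1, ?_, ?_, ?_⟩
  · rintro B ⟨hB, hBA⟩ C ⟨hC, hCA⟩
    refine ⟨hB.union hC, fun β hβ => ?_⟩
    rw [rel_union, Set.union_inter_distrib_right, hBA β hβ, hCA β hβ, Set.union_empty]
  · rintro B ⟨hB, hBA⟩ β hβ
    refine ⟨.relRange β hβ.ne_nil hB, fun γ _ => Set.eq_empty_of_forall_notMem ?_⟩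
    rintro w ⟨hw, hwA⟩
    have hw' := G.rel_rel_subset B β γ hw
    exact (hBA _ (isLabel_of_mem_rel hw')).subset ⟨hw', hwA⟩
  · rintro B ⟨-, hBA⟩ C hC hCB
    refine ⟨hC, fun β hβ => Set.subset_eq_empty ?_ (hBA β hβ)⟩
    exact Set.inter_subset_inter_left A (G.rel_mono hCB β)

theorem IsLoop.notMem_avoiding {A : Set V} {α : List Λ} (h : G.IsLoop α A) :
    A ∉ G.avoiding A := fun hA =>
  h.rel_inter_nonempty.ne_empty (hA.2 α h.isLabel)

theorem isSaturated_avoiding {A : Set V} {α : List Λ} (hA : G.MinimalSet A)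
    (hloop : G.IsLoop α A) : G.IsSaturated (G.avoiding A) := by
  refine fun B hB hrel => ⟨hB, fun β hβ => Set.not_nonempty_iff_eq_empty.mp fun hne => ?_⟩
  have hAB : A ⊆ G.rel B β := hA.subset_of_inter_nonempty (.relRange β hβ.ne_nil hB) hne
  obtain ⟨w, hw, hwA⟩ := hloop.rel_inter_nonempty
  exact ((hrel β hβ).2 α hloop.isLabel).subset ⟨G.rel_mono hAB α hw, hwA⟩

theorem rel_mem_avoiding_of_ne {A : Set V} {α β : List Λ} (hA : G.MinimalSet A)
    (hpow : ∀ δ : List Λ, G.IsLoop δ A →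
      ∃ m k : ℕ, 1 ≤ m ∧ 1 ≤ k ∧ wpow δ m = wpow α k)
    (hβ : β ∈ G.lblFrom A α.length) (hβα : β ≠ α) : G.rel A β ∈ G.avoiding A := by
  obtain ⟨hlen, _, _, _, hp⟩ := hβ
  refine ⟨.relRange β hp.ne_nil hA.1, fun γ _ => Set.not_nonempty_iff_eq_empty.mp ?_⟩
  rintro ⟨x, hx, hxA⟩
  have hβγ : G.IsLoop (β ++ γ) A := hA.isLoop_of_inter_nonempty (by simp [hp.ne_nil])
    ⟨x, G.rel_rel_subset A β γ hx, hxA⟩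
  obtain ⟨m, k, hm, hk, heq⟩ := hpow _ hβγ
  exact hβα (eq_of_wpow_append_eq_wpow hlen hm hk heq)

theorem rel_diff_mem_avoiding {A : Set V} {α : List Λ} (hS : G.Standing)
    (hA : G.MinimalSet A) (hloop : G.IsLoop α A)
    (hpow : ∀ δ : List Λ, G.IsLoop δ A →
      ∃ m k : ℕ, 1 ≤ m ∧ 1 ≤ k ∧ wpow δ m = wpow α k) :
    G.rel A α \ A ∈ G.avoiding A := by
  obtain ⟨hα, hAE, hAne, hAα⟩ := hloop
  set C := G.rel A α \ A
  have hC : G.memE C := (memE.relRange α hα hAE).diff hAE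
  refine ⟨hC, fun γ hγ => Set.not_nonempty_iff_eq_empty.mp fun hne => ?_⟩
  have hAC : A ⊆ G.rel C γ := hA.subset_of_inter_nonempty (.relRange γ hγ.ne_nil hC) hne
  have hαγ : G.IsLoop (α ++ γ) A := by
    obtain ⟨x, hx, hxA⟩ := hne
    exact hA.isLoop_of_inter_nonempty (by simp [hα])
      ⟨x, G.rel_rel_subset A α γ (G.rel_mono Set.sdiff_subset γ hx), hxA⟩
  obtain ⟨m, k, hm, hk, heq⟩ := hpow _ hαγ
  have hAk : A ⊆ G.rel A (wpow α k) := by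
    obtain ⟨j, rfl⟩ := Nat.exists_eq_add_of_le' hk
    rw [wpow_succ']
    exact subset_rel_wpow_append hAα hAα j
  have hA_rel_A : A ⊆ G.rel A (γ ++ wpow α k) := by
    rw [append_wpow_eq_of_wpow_append_eq_wpow hm hk heq]
    exact subset_rel_wpow_append hAα hαγ.2.2.2 _
  have hA_rel_C : A ⊆ G.rel C (γ ++ wpow α k) :=
    fun w hw => G.rel_rel_subset C γ _ (G.rel_mono hAC _ (hAk hw))
  have hdisj : A ∩ C = ∅ := Set.inter_sdiff_self A _
  have hwlr := hS.weakly_left_resolving A C hAE hC (γ ++ wpow α k) (by simp [hγ.ne_nil])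
  rw [hdisj, rel_empty] at hwlr
  obtain ⟨w, hw⟩ := hAne
  exact Set.eq_empty_iff_forall_notMem.mp hwlr.symm w ⟨hA_rel_A hw, hA_rel_C hw⟩

end LabeledGraph

open LabeledGraph in
theorem stmt_12_general {V : Type*} {Λ : Type*}
    (G : LabeledGraph V Λ) (hS : G.Standing)
    (A : Set V) (hA : G.MinimalSet A) (α : List Λ) (hloop : G.IsLoop α A) :
    G.IsHereditary
      {C : Set V | G.memE C ∧ ∀ β : List Λ, G.IsLabel β → G.rel C β ∩ A = ∅} ∧
    G.IsSaturated
      {C : Set V | G.memE C ∧ ∀ β : List Λ, G.IsLabel β → G.rel C β ∩ A = ∅} ∧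
    A ∉ {C : Set V | G.memE C ∧ ∀ β : List Λ, G.IsLabel β → G.rel C β ∩ A = ∅} ∧
    ((∀ β : List Λ, G.IsLoop β A → α.length ≤ β.length) →
      G.HasExit α A →
      (∀ β : List Λ, G.IsLoop β A →
        ∃ m k : ℕ, 1 ≤ m ∧ 1 ≤ k ∧ wpow β m = wpow α k) →
      ∃ C ∈ {C : Set V | G.memE C ∧ ∀ β : List Λ, G.IsLabel β → G.rel C β ∩ A = ∅},
        C.Nonempty) := by
  refine ⟨isHereditary_avoiding A, isSaturated_avoiding hA hloop, hloop.notMem_avoiding,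
    fun _ hexit hpow => ?_⟩
  rcases hexit with ⟨β, hβ, hβα, hne⟩ | hssub
  · exact ⟨_, rel_mem_avoiding_of_ne hA hpow hβ hβα, hne⟩
  · exact ⟨_, rel_diff_mem_avoiding hS hA hloop hpow, Set.sdiff_nonempty.mpr hssub.not_subset⟩

/-- Part of the proof of Proposition 4.4: for a minimal `A ∈ ℰ` carrying a loop `(α, A)`,
the set `H = {B ∈ ℰ : r(B, β) ∩ A = ∅ for all β ∈ ℒ*(E)}` is hereditary and saturated
and `A ∉ H`; if moreover `α` has the smallest length among loops at `A`, `α` has an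
exit, and every loop `(β, A)` satisfies `βᵐ = αᵏ` for some `m, k ≥ 1`, then `H`
contains a nonempty set. -/
theorem stmt_12 {V : Type*} {Λ : Type*} [Countable V] [Countable Λ]
    (G : LabeledGraph V Λ) [Countable G.Edge] (hS : G.Standing)
    (A : Set V) (hA : G.MinimalSet A) (α : List Λ) (hloop : G.IsLoop α A) :
    G.IsHereditary
      {C : Set V | G.memE C ∧ ∀ β : List Λ, G.IsLabel β → G.rel C β ∩ A = ∅} ∧
    G.IsSaturated
      {C : Set V | G.memE C ∧ ∀ β : List Λ, G.IsLabel β → G.rel C β ∩ A = ∅} ∧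
    A ∉ {C : Set V | G.memE C ∧ ∀ β : List Λ, G.IsLabel β → G.rel C β ∩ A = ∅} ∧
    ((∀ β : List Λ, G.IsLoop β A → α.length ≤ β.length) →
      G.HasExit α A →
      (∀ β : List Λ, G.IsLoop β A →
        ∃ m k : ℕ, 1 ≤ m ∧ 1 ≤ k ∧ wpow β m = wpow α k) →
      ∃ C ∈ {C : Set V | G.memE C ∧ ∀ β : List Λ, G.IsLabel β → G.rel C β ∩ A = ∅},
        C.Nonempty) :=
  stmt_12_general G hS A hA α hloop
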